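/- arXiv:1211.2788 — 2 statements merged into one kernel-verified Lean document; each statement's English description precedes it below -/
import Mathlib

section
/- For any partition λ, let λ^◇ = { s ∈ λ : a_λ(s) + l_λ(s) + 1 ≡ 0 (mod 2) }. Then the cardinality of λ^◇ equals (|λ| - |λ̃|)/2, where λ̃ is the 2-core of λ. -/
/-- Two boxes are adjacent if they are horizontal or vertical neighbours. -/
def CellAdjacent (a b : ℕ × ℕ) : Prop :=
  (a.1 = b.1 ∧ b.2 = a.2 + 1) ∨ (a.2 = b.2 ∧ b.1 = a.1 + 1)

/-- `ν` is obtained from `μ` by removing one domino keeping a Young diagram shape. -/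
def DominoStep (μ ν : YoungDiagram) : Prop :=
  ν ≤ μ ∧ ∃ a b : ℕ × ℕ, CellAdjacent a b ∧ a ∉ ν ∧ b ∉ ν ∧
    μ.cells = insert a (insert b ν.cells)

/-- A Young diagram is a 2-core if no domino can be removed from it. -/
def IsTwoCore (μ : YoungDiagram) : Prop := ∀ ν : YoungDiagram, ¬ DominoStep μ ν

/-- `c` is the 2-core of `lam`. -/
def TwoCoreOf (lam c : YoungDiagram) : Prop :=
  Relation.ReflTransGen DominoStep lam c ∧ IsTwoCore c

/-- The hook length `a(s) + l(s) + 1` of a box `s` of `μ`. -/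
def hookLen (μ : YoungDiagram) (s : ℕ × ℕ) : ℕ :=
  (μ.rowLen s.1 - s.2 - 1) + (μ.colLen s.2 - s.1 - 1) + 1

/-- `λ^◇`: the boxes of `λ` with even hook length. -/
def diamond (μ : YoungDiagram) : Finset (ℕ × ℕ) :=
  μ.cells.filter fun s => hookLen μ s % 2 = 0

/-!
Removing a domino lowers `|λ|` by two and `|λ^◇|` by exactly one; since a 2-core is a staircase,
all of whose hook lengths are odd, induction along the domino removals gives the identity.

By transposition it suffices to remove a horizontal domino `{(i, j), (i, j + 1)}` from `μ`,
leaving `ν`. Columns `j` and `j + 1` of `ν` both have length `i`, so swapping them maps `ν` to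
itself. In row `i` the swap is the identity and hook lengths drop by two from `μ` to `ν`; in a
row `x < i` it exchanges `(x, j)` and `(x, j + 1)`, whose hook lengths in `ν` differ by one, while
both grow by one in `μ`. Hence the swap maps `ν^◇` onto `μ^◇ \ {(i, j)}`.
-/

open YoungDiagram

theorem mem_diamond {μ : YoungDiagram} {s : ℕ × ℕ} :
    s ∈ diamond μ ↔ s ∈ μ ∧ hookLen μ s % 2 = 0 := by
  simp [diamond]

theorem CellAdjacent.ne {a b : ℕ × ℕ} (h : CellAdjacent a b) : a ≠ b := by
  rcases h with ⟨-, h⟩ | ⟨-, h⟩ <;> intro hab <;> subst hab <;> omega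

theorem CellAdjacent.swap {a b : ℕ × ℕ} (h : CellAdjacent a b) : CellAdjacent a.swap b.swap :=
  Or.symm h

theorem cells_transpose_of_cells_eq {μ ν : YoungDiagram} {a b : ℕ × ℕ}
    (h : μ.cells = insert a (insert b ν.cells)) :
    μ.transpose.cells = insert a.swap (insert b.swap ν.transpose.cells) := by
  ext s
  have := congrArg (s.swap ∈ ·) h
  simp only [mem_cells, mem_transpose, Finset.mem_insert] at this ⊢
  rw [this, Prod.swap_eq_iff_eq_swap, Prod.swap_eq_iff_eq_swap]

theorem DominoStep.transpose {μ ν : YoungDiagram} (h : DominoStep μ ν) :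
    DominoStep μ.transpose ν.transpose := by
  obtain ⟨hle, a, b, hab, ha, hb, hcells⟩ := h
  exact ⟨YoungDiagram.transpose_mono hle, a.swap, b.swap, hab.swap, by simpa [mem_transpose],
    by simpa [mem_transpose], cells_transpose_of_cells_eq hcells⟩

theorem DominoStep.card_eq {μ ν : YoungDiagram} (h : DominoStep μ ν) : μ.card = ν.card + 2 := by
  obtain ⟨-, a, b, hab, ha, hb, hcells⟩ := h
  rw [YoungDiagram.card, hcells, Finset.card_insert_of_notMem, Finset.card_insert_of_notMem]
  · simpa using hb
  · simpa [hab.ne] using ha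

theorem IsTwoCore.transpose {c : YoungDiagram} (hc : IsTwoCore c) : IsTwoCore c.transpose :=
  fun ν hν => hc ν.transpose (by simpa only [transpose_transpose] using hν.transpose)

theorem hookLen_transpose (μ : YoungDiagram) (s : ℕ × ℕ) :
    hookLen μ.transpose s = hookLen μ s.swap := by
  simp only [hookLen, rowLen_transpose, colLen_transpose, Prod.fst_swap, Prod.snd_swap]
  omega

theorem diamond_transpose (μ : YoungDiagram) :
    diamond μ.transpose = (diamond μ).map (Equiv.prodComm ℕ ℕ).toEmbedding := by
  ext s
  simp [mem_diamond, mem_transpose, hookLen_transpose]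

theorem card_diamond_transpose (μ : YoungDiagram) :
    (diamond μ.transpose).card = (diamond μ).card := by
  rw [diamond_transpose, Finset.card_map]

structure HorizontalDominoStep (μ ν : YoungDiagram) (i j : ℕ) : Prop where
  left_notMem : (i, j) ∉ ν
  right_notMem : (i, j + 1) ∉ ν
  cells_eq : μ.cells = insert (i, j) (insert (i, j + 1) ν.cells)

namespace HorizontalDominoStep

variable {μ ν : YoungDiagram} {i j : ℕ}

theorem mem_iff (h : HorizontalDominoStep μ ν i j) {s : ℕ × ℕ} :
    s ∈ μ ↔ s = (i, j) ∨ s = (i, j + 1) ∨ s ∈ ν := by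
  rw [← mem_cells, h.cells_eq]
  simp only [Finset.mem_insert, mem_cells]

theorem card_filter (h : HorizontalDominoStep μ ν i j) (p : ℕ × ℕ → Prop) [DecidablePred p] :
    (μ.cells.filter p).card =
      (ν.cells.filter p).card + (if p (i, j) then 1 else 0) + (if p (i, j + 1) then 1 else 0) := by
  rw [h.cells_eq, Finset.filter_insert, Finset.filter_insert]
  split_ifs <;> simp [Finset.card_insert_of_notMem, h.left_notMem, h.right_notMem]

theorem rowLen_eq (h : HorizontalDominoStep μ ν i j) (k : ℕ) :
    μ.rowLen k = ν.rowLen k + if k = i then 2 else 0 := by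
  simp only [rowLen_eq_card, row, h.card_filter]
  split_ifs <;> omega

theorem colLen_eq (h : HorizontalDominoStep μ ν i j) (y : ℕ) :
    μ.colLen y = ν.colLen y + if y = j ∨ y = j + 1 then 1 else 0 := by
  simp only [colLen_eq_card, col, h.card_filter]
  split_ifs <;> omega

theorem rowLen_domino (h : HorizontalDominoStep μ ν i j) :
    ν.rowLen i = j ∧ μ.rowLen i = j + 2 := by
  have hν := mem_iff_lt_rowLen.not.mp h.left_notMem
  have hμ := mem_iff_lt_rowLen.mp (h.mem_iff.mpr (Or.inr (Or.inl rfl)))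
  have hrow := h.rowLen_eq i
  simp only [if_true] at hrow
  omega

theorem colLen_domino (h : HorizontalDominoStep μ ν i j) {y : ℕ} (hy : y = j ∨ y = j + 1) :
    ν.colLen y = i ∧ μ.colLen y = i + 1 := by
  have hcol := h.colLen_eq y
  simp only [hy, if_true] at hcol
  have hν : ¬ i < ν.colLen y := by
    rw [← mem_iff_lt_colLen]
    rcases hy with rfl | rfl
    exacts [h.left_notMem, h.right_notMem]
  have hμ : i < μ.colLen y := by
    rw [← mem_iff_lt_colLen, h.mem_iff]
    rcases hy with rfl | rfl <;> simp
  omega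

theorem colLen_swap (h : HorizontalDominoStep μ ν i j) (y : ℕ) :
    ν.colLen (Equiv.swap j (j + 1) y) = ν.colLen y := by
  have hj := (h.colLen_domino (Or.inl rfl)).1
  have hj' := (h.colLen_domino (Or.inr rfl)).1
  rw [Equiv.swap_apply_def]
  split_ifs with h1 h2
  · rw [h1, hj, hj']
  · rw [h2, hj, hj']
  · rfl

theorem swap_mem_iff (h : HorizontalDominoStep μ ν i j) (x y : ℕ) :
    (x, Equiv.swap j (j + 1) y) ∈ ν ↔ (x, y) ∈ ν := by
  rw [mem_iff_lt_colLen, mem_iff_lt_colLen, h.colLen_swap]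

theorem hookLen_swap_mod_two (h : HorizontalDominoStep μ ν i j) {x y : ℕ} (hs : (x, y) ∈ ν) :
    hookLen μ (x, Equiv.swap j (j + 1) y) % 2 = hookLen ν (x, y) % 2 := by
  have hrow := h.rowLen_eq
  by_cases hy : y = j ∨ y = j + 1
  · have hx : x < i := (h.colLen_domino hy).1 ▸ mem_iff_lt_colLen.mp hs
    have hcj := h.colLen_domino (Or.inl rfl)
    have hcj' := h.colLen_domino (Or.inr rfl)
    have hlong : j + 1 < ν.rowLen x :=
      mem_iff_lt_rowLen.mp (mem_iff_lt_colLen.mpr (hcj'.1 ▸ hx))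
    rcases hy with rfl | rfl
    · simp only [hookLen, Equiv.swap_apply_left, hrow, hcj.1, hcj'.2, hx.ne, if_false]
      omega
    · simp only [hookLen, Equiv.swap_apply_right, hrow, hcj.2, hcj'.1, hx.ne, if_false]
      omega
  · obtain ⟨hj, hj'⟩ := not_or.mp hy
    rw [Equiv.swap_apply_of_ne_of_ne hj hj']
    simp only [hookLen, hrow, h.colLen_eq, hj, hj', or_self, if_false]
    split_ifs with hx
    · subst hx
      have := h.rowLen_domino
      have := mem_iff_lt_rowLen.mp hs
      omega
    · rfl

theorem hookLen_left (h : HorizontalDominoStep μ ν i j) : hookLen μ (i, j) = 2 := by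
  have := h.rowLen_domino
  have := h.colLen_domino (Or.inl rfl)
  simp only [hookLen]
  omega

theorem hookLen_right (h : HorizontalDominoStep μ ν i j) : hookLen μ (i, j + 1) = 1 := by
  have := h.rowLen_domino
  have := h.colLen_domino (Or.inr rfl)
  simp only [hookLen]
  omega

theorem diamond_eq (h : HorizontalDominoStep μ ν i j) :
    diamond μ = insert (i, j)
      ((diamond ν).map ((Equiv.refl ℕ).prodCongr (Equiv.swap j (j + 1))).toEmbedding) := by
  ext ⟨x, y⟩
  simp only [Finset.mem_insert, Finset.mem_map_equiv, mem_diamond, Equiv.prodCongr_symm,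
    Equiv.refl_symm, Equiv.symm_swap, Equiv.prodCongr_apply, Equiv.refl_apply, Prod.map_apply]
  by_cases hs : (x, y) ∈ ν
  · have hμ : (x, y) ∈ μ := h.mem_iff.mpr (Or.inr (Or.inr hs))
    have hne : (x, y) ≠ (i, j) := fun he => h.left_notMem (he ▸ hs)
    have hhook := h.hookLen_swap_mod_two ((h.swap_mem_iff x y).mpr hs)
    rw [Equiv.swap_apply_self] at hhook
    simp [hμ, hne, h.swap_mem_iff, hs, hhook]
  · have hswap : (x, Equiv.swap j (j + 1) y) ∉ ν := (h.swap_mem_iff x y).not.mpr hs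
    simp only [hswap, false_and, or_false, h.mem_iff, hs]
    constructor
    · rintro ⟨he | he, heven⟩
      · exact he
      · rw [he, h.hookLen_right] at heven
        exact absurd heven one_ne_zero
    · rintro he
      rw [he, h.hookLen_left]
      exact ⟨Or.inl rfl, rfl⟩

theorem card_diamond_eq (h : HorizontalDominoStep μ ν i j) :
    (diamond μ).card = (diamond ν).card + 1 := by
  rw [h.diamond_eq, Finset.card_insert_of_notMem, Finset.card_map]
  simp [Finset.mem_map_equiv, mem_diamond, h.right_notMem]

end HorizontalDominoStep

theorem DominoStep.exists_horizontal {μ ν : YoungDiagram} (h : DominoStep μ ν) :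
    (∃ i j, HorizontalDominoStep μ ν i j) ∨
      ∃ i j, HorizontalDominoStep μ.transpose ν.transpose i j := by
  obtain ⟨-, ⟨i, j⟩, ⟨k, l⟩, ⟨rfl, rfl⟩ | ⟨rfl, rfl⟩, ha, hb, hcells⟩ := h
  · exact Or.inl ⟨i, j, ha, hb, hcells⟩
  · exact Or.inr ⟨j, i, by simpa [mem_transpose], by simpa [mem_transpose],
      cells_transpose_of_cells_eq hcells⟩

theorem DominoStep.card_diamond_eq {μ ν : YoungDiagram} (h : DominoStep μ ν) :
    (diamond μ).card = (diamond ν).card + 1 := by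
  rcases h.exists_horizontal with ⟨i, j, hh⟩ | ⟨i, j, hh⟩
  · exact hh.card_diamond_eq
  · simpa only [card_diamond_transpose] using hh.card_diamond_eq

theorem exists_dominoStep_of_rowLen_add_two_le {μ : YoungDiagram} {i : ℕ}
    (h : μ.rowLen (i + 1) + 2 ≤ μ.rowLen i) : ∃ ν, DominoStep μ ν := by
  set j := μ.rowLen i - 2
  have hlow : IsLowerSet (↑(μ.cells \ {(i, j), (i, j + 1)}) : Set (ℕ × ℕ)) := by
    rintro ⟨x, y⟩ ⟨u, v⟩ ⟨hu, hv⟩ hxy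
    simp only [Finset.coe_sdiff, Set.mem_sdiff, Finset.mem_coe, mem_cells, Finset.coe_insert,
      Finset.coe_singleton, Set.mem_insert_iff, Set.mem_singleton_iff, Prod.mk.injEq] at hxy ⊢
    obtain ⟨hxy, hne⟩ := hxy
    refine ⟨μ.up_left_mem hu hv hxy, ?_⟩
    have hy := mem_iff_lt_rowLen.mp hxy
    have hanti := μ.rowLen_anti (i + 1) x
    rcases eq_or_ne x i with rfl | hx <;> omega
  refine ⟨⟨_, hlow⟩, fun s hs => (Finset.mem_sdiff.mp hs).1, (i, j), (i, j + 1),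
    Or.inl ⟨rfl, rfl⟩, ?_, ?_, ?_⟩
  · change (i, j) ∉ μ.cells \ _
    simp
  · change (i, j + 1) ∉ μ.cells \ _
    simp
  · change μ.cells = insert _ (insert _ (μ.cells \ _))
    have hj : (i, j) ∈ μ.cells := by rw [mem_cells, mem_iff_lt_rowLen]; omega
    have hj' : (i, j + 1) ∈ μ.cells := by rw [mem_cells, mem_iff_lt_rowLen]; omega
    ext s
    simp only [Finset.mem_insert, Finset.mem_sdiff, Finset.mem_singleton]
    grind

namespace IsTwoCore

variable {c : YoungDiagram}

theorem rowLen_le (hc : IsTwoCore c) (i : ℕ) : c.rowLen i ≤ c.rowLen (i + 1) + 1 := by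
  by_contra! h
  obtain ⟨ν, hν⟩ := exists_dominoStep_of_rowLen_add_two_le (μ := c) (i := i) (by omega)
  exact hc ν hν

theorem colLen_le (hc : IsTwoCore c) (j : ℕ) : c.colLen j ≤ c.colLen (j + 1) + 1 := by
  simpa only [rowLen_transpose] using hc.transpose.rowLen_le j

/-- Two equal nonempty rows of length `r` would make column `r - 1` longer than column `r` by at
least two. -/
theorem rowLen_succ (hc : IsTwoCore c) (i : ℕ) : c.rowLen (i + 1) = c.rowLen i - 1 := by
  have hanti := c.rowLen_anti i (i + 1) i.le_succ
  have hle := hc.rowLen_le i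
  set r := c.rowLen i with hr
  by_contra hne
  have heq : c.rowLen (i + 1) = r := by omega
  have hlong : i + 1 < c.colLen (r - 1) := mem_iff_lt_colLen.mp (mem_iff_lt_rowLen.mpr (by omega))
  have hshort : c.colLen r ≤ i :=
    not_lt.mp (mem_iff_lt_colLen.not.mp (mem_iff_lt_rowLen.not.mpr hr.le.not_gt))
  have hcol := hc.colLen_le (r - 1)
  rw [Nat.sub_add_cancel (by omega)] at hcol
  omega

theorem rowLen_eq (hc : IsTwoCore c) (i : ℕ) : c.rowLen i = c.rowLen 0 - i := by
  induction i with
  | zero => rfl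
  | succ i ih => rw [hc.rowLen_succ, ih]; omega

theorem colLen_eq (hc : IsTwoCore c) (j : ℕ) : c.colLen j = c.rowLen 0 - j :=
  eq_of_forall_lt_iff fun x => by
    rw [← mem_iff_lt_colLen, mem_iff_lt_rowLen, hc.rowLen_eq]
    omega

theorem diamond_eq_empty (hc : IsTwoCore c) : diamond c = ∅ := by
  refine Finset.eq_empty_of_forall_notMem fun ⟨x, y⟩ hs => ?_
  obtain ⟨hmem, heven⟩ := mem_diamond.mp hs
  have hy := mem_iff_lt_rowLen.mp hmem
  simp only [hookLen, hc.rowLen_eq x, hc.colLen_eq y] at heven hy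
  omega

end IsTwoCore

/-- `|λ^◇| = (|λ| - |λ̃|) / 2` where `λ̃` is the 2-core of `λ`. -/
theorem card_diamond_eq (lam c : YoungDiagram) (h : TwoCoreOf lam c) :
    c.card + 2 * (diamond lam).card = lam.card := by
  obtain ⟨hsteps, hcore⟩ := h
  induction hsteps using Relation.ReflTransGen.head_induction_on with
  | refl => simp [hcore.diamond_eq_empty]
  | head hstep _ ih => rw [hstep.card_diamond_eq, hstep.card_eq, ← ih]; ring
end

section
/- The generating function identity Σ_λ x^{(|λ| - (2d² - d))/2}, summed over partitions λ with angle color 0 and d(λ) = d, equals Π_{k≥1} 1/(1-x^k)², as a formal power series in x. Equivalently: the number of partitions λ with d(λ) = d and |λ| = 2d² - d + 2n equals the number of pairs of partitions with total size n. -/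
/-!
Encode a partition `μ` with charge `c` by its beta-set `{μᵢ - 1 - i + c | i ∈ ℕ} ⊆ ℤ`. Splitting
the beta-set of `λ` (charge `0`) by parity, `2a ↦ a` on even and `2a + 1 ↦ a` on odd elements,
yields the beta-sets of two partitions `μ₀, μ₁` (the 2-quotient of `λ`) with opposite charges, and
any such pair interleaves back to a unique `λ`. Everything is computed in a window `[-2N, 2N)`
outside which the beta-set is trivial. The color difference of row `i` is
`[λᵢ - 1 - i even] - [i odd]`, so `d(λ)` is the charge of `μ₀`; comparing the sums of the elements
in the windows then gives `|λ| = 2|μ₀| + 2|μ₁| + 2d² - d`.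
-/

/-- `d(μ) = N₀(μ) - N₁(μ)` for a Young diagram colored with angle color 0. -/
def dcol0 (μ : YoungDiagram) : ℤ :=
  ((μ.cells.filter fun c => (c.1 + c.2) % 2 = 0).card : ℤ) -
    ((μ.cells.filter fun c => (c.1 + c.2) % 2 = 1).card : ℤ)

open Finset

theorem sum_range_neg_one_pow_add (i L : ℕ) :
    ∑ j ∈ range L, (-1 : ℤ) ^ (i + j) =
      (if Even ((L : ℤ) - 1 - i) then 1 else 0) - (if Odd i then 1 else 0) := by
  induction L with
  | zero => simp [Int.even_sub, parity_simps]
  | succ L ih =>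
    rw [sum_range_succ, ih, neg_one_pow_eq_ite]
    simp only [Int.even_iff, Nat.even_iff, Nat.odd_iff]
    push_cast
    split_ifs <;> omega

theorem sum_range_two_mul_ite_odd (N : ℕ) :
    ∑ i ∈ range (2 * N), (if Odd i then (1 : ℤ) else 0) = N := by
  induction N with
  | zero => simp
  | succ N ih =>
    rw [show 2 * (N + 1) = 2 * N + 1 + 1 by ring, sum_range_succ, sum_range_succ, ih]
    simp [parity_simps]

theorem Nat.nth_count_add_of_forall_le {p : ℕ → Prop} [DecidablePred p] {M : ℕ}
    (hp : ∀ m, M ≤ m → p m) (t : ℕ) : Nat.nth p (Nat.count p M + t) = M + t := by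
  have hcount : Nat.count p (M + t) = Nat.count p M + t := by
    rw [Nat.count_add,
      Nat.count_of_forall (p := fun k => p (M + k)) fun k _ => hp (M + k) (by omega)]
  rw [← hcount, Nat.nth_count (hp _ (by omega))]

theorem StrictAnti.exists_tail_eq_of_Iio_subset_range {s : ℕ → ℤ} (hs : StrictAnti s)
    {c : ℤ} {L : ℕ} (hL : ∀ i, L ≤ i → s i = c - 1 - i) {N : ℕ}
    (hN : Set.Iio (-(N : ℤ)) ⊆ Set.range s) :
    ∃ k : ℕ, (k : ℤ) = N + c ∧ ∀ i, k ≤ i → s i = c - 1 - i := by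
  obtain ⟨j, hj⟩ := hN (show -(N : ℤ) - 1 < -N by omega)
  -- `s` decreases strictly and hits every integer below `-N`, so there it descends in steps of 1
  have hstep : ∀ t : ℕ, s (j + t) = -N - 1 - t := by
    intro t
    induction t with
    | zero => simpa using hj
    | succ t ih =>
      obtain ⟨i, hi⟩ := hN (show -(N : ℤ) - 2 - t < -N by omega)
      have hlt : j + t < i := hs.lt_iff_gt.1 (by omega)
      have h1 := hs.antitone (show j + (t + 1) ≤ i by omega)
      have h2 := hs (show j + t < j + (t + 1) by omega)
      push_cast
      omega
  have hjL := hstep L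
  rw [hL _ (by omega)] at hjL
  refine ⟨j, by push_cast at hjL; omega, fun i hi => ?_⟩
  obtain ⟨t, rfl⟩ := Nat.exists_eq_add_of_le hi
  rw [hstep]
  push_cast
  omega

namespace YoungDiagram

theorem sum_cells_eq_sum_rows {M : Type*} [AddCommMonoid M] (μ : YoungDiagram) {k : ℕ}
    (hk : ∀ i, k ≤ i → μ.rowLen i = 0) (f : ℕ × ℕ → M) :
    ∑ c ∈ μ.cells, f c = ∑ i ∈ range k, ∑ j ∈ range (μ.rowLen i), f (i, j) := by
  have hmaps : (μ.cells : Set (ℕ × ℕ)).MapsTo Prod.fst (range k) := by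
    rintro ⟨i, j⟩ hc
    have : j < μ.rowLen i := mem_iff_lt_rowLen.1 hc
    by_contra hi
    simp_all
  rw [← sum_fiberwise_of_maps_to hmaps]
  refine sum_congr rfl fun i _ => ?_
  rw [← row, row_eq_prod, sum_product, sum_singleton]

theorem card_eq_sum_rowLen (μ : YoungDiagram) {k : ℕ} (hk : ∀ i, k ≤ i → μ.rowLen i = 0) :
    μ.card = ∑ i ∈ range k, μ.rowLen i := by
  rw [YoungDiagram.card, card_eq_sum_ones, μ.sum_cells_eq_sum_rows hk]
  simp

theorem dcol0_eq_sum_neg_one_pow (μ : YoungDiagram) :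
    dcol0 μ = ∑ c ∈ μ.cells, (-1 : ℤ) ^ (c.1 + c.2) := by
  have h (n : ℕ) : (-1 : ℤ) ^ n = (if n % 2 = 0 then 1 else 0) - (if n % 2 = 1 then 1 else 0) := by
    simp only [neg_one_pow_eq_ite, Nat.even_iff]
    split_ifs <;> omega
  simp only [dcol0, h, sum_sub_distrib, sum_boole]

theorem rowLen_eq_zero_of_colLen_le (μ : YoungDiagram) {i : ℕ} (hi : μ.colLen 0 ≤ i) :
    μ.rowLen i = 0 := by
  by_contra h
  have : i < μ.colLen 0 := mem_iff_lt_colLen.1 (mem_iff_lt_rowLen.2 (Nat.pos_of_ne_zero h))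
  omega

def ofRowLen (f : ℕ → ℕ) (hf : Antitone f) (k : ℕ) : YoungDiagram where
  cells := {c ∈ range k ×ˢ range (f 0) | c.2 < f c.1}
  isLowerSet := by
    rintro ⟨i, j⟩ ⟨i', j'⟩ ⟨hi, hj⟩ h
    simp only [coe_filter, mem_product, mem_range, Set.mem_ofPred_eq] at hi hj h ⊢
    have := hf hi
    exact ⟨⟨by omega, by omega⟩, by omega⟩

theorem rowLen_ofRowLen (f : ℕ → ℕ) (hf : Antitone f) (k : ℕ) (hk : ∀ i, k ≤ i → f i = 0)
    (i : ℕ) : (ofRowLen f hf k).rowLen i = f i := by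
  refine eq_of_forall_lt_iff fun j => ?_
  rw [← mem_iff_lt_rowLen, ← mem_cells]
  simp only [ofRowLen, mem_filter, mem_product, mem_range, and_iff_right_iff_imp]
  intro hj
  have := hf (Nat.zero_le i)
  refine ⟨not_le.1 fun hki => ?_, by omega⟩
  simp [hk i hki] at hj

def IsWindow (S : Set ℤ) (N : ℕ) : Prop := Set.Iio (-(N : ℤ)) ⊆ S ∧ S ⊆ Set.Iio (N : ℤ)

theorem IsWindow.mono {S : Set ℤ} {N M : ℕ} (h : IsWindow S N) (hNM : N ≤ M) :
    IsWindow S M :=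
  ⟨fun x hx => h.1 (by simp only [Set.mem_Iio] at hx ⊢; omega),
    fun x hx => by have := h.2 hx; simp only [Set.mem_Iio] at this ⊢; omega⟩

open Classical in
noncomputable def window (S : Set ℤ) (N : ℕ) : Finset ℤ := {x ∈ Ico (-(N : ℤ)) N | x ∈ S}

theorem mem_window {S : Set ℤ} {N : ℕ} {x : ℤ} :
    x ∈ window S N ↔ x ∈ S ∧ -(N : ℤ) ≤ x ∧ x < N := by
  simp [window, and_comm]

def evenPart (S : Set ℤ) : Set ℤ := {a | 2 * a ∈ S}

def oddPart (S : Set ℤ) : Set ℤ := {a | 2 * a + 1 ∈ S}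

def interleave (S₀ S₁ : Set ℤ) : Set ℤ := (2 * ·) '' S₀ ∪ (2 * · + 1) '' S₁

@[simp]
theorem evenPart_interleave (S₀ S₁ : Set ℤ) : evenPart (interleave S₀ S₁) = S₀ := by
  ext a
  simp only [evenPart, interleave, Set.mem_ofPred_eq, Set.mem_union, Set.mem_image]
  constructor
  · rintro (⟨b, hb, hab⟩ | ⟨b, -, hab⟩)
    · rwa [show a = b by omega]
    · omega
  · exact fun ha => Or.inl ⟨a, ha, rfl⟩

@[simp]
theorem oddPart_interleave (S₀ S₁ : Set ℤ) : oddPart (interleave S₀ S₁) = S₁ := by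
  ext a
  simp only [oddPart, interleave, Set.mem_ofPred_eq, Set.mem_union, Set.mem_image]
  constructor
  · rintro (⟨b, -, hab⟩ | ⟨b, hb, hab⟩)
    · omega
    · rwa [show a = b by omega]
  · exact fun ha => Or.inr ⟨a, ha, rfl⟩

theorem eq_of_evenPart_eq_of_oddPart_eq {S T : Set ℤ} (h₀ : evenPart S = evenPart T)
    (h₁ : oddPart S = oddPart T) : S = T := by
  ext x
  obtain ⟨a, rfl | rfl⟩ := Int.even_or_odd' x
  · exact Set.ext_iff.1 h₀ a
  · exact Set.ext_iff.1 h₁ a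

theorem isWindow_two_mul_iff {S : Set ℤ} {N : ℕ} :
    IsWindow S (2 * N) ↔ IsWindow (evenPart S) N ∧ IsWindow (oddPart S) N := by
  simp only [IsWindow, evenPart, oddPart, Set.subset_def, Set.mem_Iio, Set.mem_ofPred_eq]
  constructor
  · rintro ⟨hlo, hhi⟩
    refine ⟨⟨fun a ha => hlo _ (by omega), fun a ha => ?_⟩, ⟨fun a ha => hlo _ (by omega),
      fun a ha => ?_⟩⟩ <;> · have := hhi _ ha; omega
  · rintro ⟨⟨hlo₀, hhi₀⟩, ⟨hlo₁, hhi₁⟩⟩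
    refine ⟨fun x hx => ?_, fun x hx => ?_⟩ <;> obtain ⟨a, rfl | rfl⟩ := Int.even_or_odd' x
    · exact hlo₀ a (by omega)
    · exact hlo₁ a (by omega)
    · have := hhi₀ a hx; omega
    · have := hhi₁ a hx; omega

theorem sum_window_two_mul {M : Type*} [AddCommMonoid M] (S : Set ℤ) (N : ℕ) (f : ℤ → M) :
    ∑ x ∈ window S (2 * N), f x =
      ∑ a ∈ window (evenPart S) N, f (2 * a) + ∑ a ∈ window (oddPart S) N, f (2 * a + 1) := by
  have h₀ : (window S (2 * N)).filter Even = (window (evenPart S) N).image (2 * ·) := by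
    ext x
    simp only [mem_filter, mem_image, mem_window, evenPart, Set.mem_ofPred_eq]
    constructor
    · rintro ⟨⟨hx, hlo, hhi⟩, a, rfl⟩
      exact ⟨a, ⟨by rwa [two_mul], by omega, by omega⟩, by ring⟩
    · rintro ⟨a, ⟨ha, hlo, hhi⟩, rfl⟩
      exact ⟨⟨ha, by omega, by omega⟩, even_two_mul a⟩
  have h₁ : (window S (2 * N)).filter (¬Even ·) = (window (oddPart S) N).image (2 * · + 1) := by
    ext x
    simp only [mem_filter, mem_image, mem_window, oddPart, Set.mem_ofPred_eq, Int.not_even_iff_odd]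
    constructor
    · rintro ⟨⟨hx, hlo, hhi⟩, a, rfl⟩
      exact ⟨a, ⟨hx, by omega, by omega⟩, rfl⟩
    · rintro ⟨a, ⟨ha, hlo, hhi⟩, rfl⟩
      exact ⟨⟨ha, by omega, by omega⟩, odd_two_mul_add_one a⟩
  rw [← sum_filter_add_sum_filter_not _ Even, h₀, h₁, sum_image (by intro a _ b _ h; simpa using h),
    sum_image (by intro a _ b _ h; simpa using h)]

theorem card_window_two_mul (S : Set ℤ) (N : ℕ) :
    #(window S (2 * N)) = #(window (evenPart S) N) + #(window (oddPart S) N) := by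
  simp only [card_eq_sum_ones]
  exact sum_window_two_mul S N _

def beta (c : ℤ) (μ : YoungDiagram) (i : ℕ) : ℤ := μ.rowLen i + c - 1 - i

def betaSet (c : ℤ) (μ : YoungDiagram) : Set ℤ := Set.range (beta c μ)

theorem beta_strictAnti (c : ℤ) (μ : YoungDiagram) : StrictAnti (beta c μ) :=
  strictAnti_nat_of_succ_lt fun i => by
    have := μ.rowLen_anti i (i + 1) (Nat.le_succ i)
    simp only [beta]
    omega

theorem betaSet_injective (c : ℤ) : Function.Injective (betaSet c) := by
  intro μ ν h
  have hβ : beta c μ = beta c ν :=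
    ((beta_strictAnti c μ).dual_right.range_inj (beta_strictAnti c ν).dual_right).1 h
  ext ⟨i, j⟩
  have := congrFun hβ i
  simp only [beta] at this
  simp only [mem_cells, mem_iff_lt_rowLen]
  omega

theorem exists_beta_eq {s : ℕ → ℤ} (hs : StrictAnti s) {c : ℤ} {k : ℕ}
    (hk : ∀ i, k ≤ i → s i = c - 1 - i) : ∃ μ, beta c μ = s := by
  have hanti : Antitone fun i => s i + i :=
    antitone_nat_of_succ_le fun i => by have := hs (lt_add_one i); push_cast; omega
  have hpos : ∀ i, c - 1 ≤ s i + i := fun i => by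
    have h1 := hanti (le_max_left i k)
    have h2 := hk _ (le_max_right i k)
    simp only at h1
    omega
  have hf : Antitone fun i => (s i + 1 + i - c).toNat := fun a b hab =>
    Int.toNat_le_toNat (by have := hanti hab; simp only at this; omega)
  refine ⟨ofRowLen _ hf k, funext fun i => ?_⟩
  have hrow := rowLen_ofRowLen _ hf k (fun j hj => by simp [hk j hj]; omega) i
  have := hpos i
  simp only [beta, hrow]
  omega

theorem exists_isWindow_betaSet (c : ℤ) (μ : YoungDiagram) : ∃ N, IsWindow (betaSet c μ) N := by
  refine ⟨μ.colLen 0 + μ.rowLen 0 + c.natAbs, fun x hx => ?_, ?_⟩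
  · refine ⟨(c - 1 - x).toNat, ?_⟩
    simp only [Set.mem_Iio] at hx
    rw [beta, rowLen_eq_zero_of_colLen_le μ (by omega)]
    omega
  · rintro _ ⟨i, rfl⟩
    have := (beta_strictAnti c μ).antitone (Nat.zero_le i)
    simp only [beta, Set.mem_Iio] at this ⊢
    omega

theorem IsWindow.exists_window_betaSet_eq_image {c : ℤ} {μ : YoungDiagram} {N : ℕ}
    (h : IsWindow (betaSet c μ) N) :
    ∃ k : ℕ, (k : ℤ) = N + c ∧ (∀ i, k ≤ i → μ.rowLen i = 0) ∧
      window (betaSet c μ) N = (range k).image (beta c μ) := by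
  obtain ⟨k, hkN, hk⟩ := (beta_strictAnti c μ).exists_tail_eq_of_Iio_subset_range (c := c)
    (fun i hi => by rw [beta, rowLen_eq_zero_of_colLen_le μ hi]; ring) h.1
  refine ⟨k, hkN, fun i hi => by have := hk i hi; simp only [beta] at this; omega, ?_⟩
  ext x
  simp only [mem_window, mem_image, mem_range, betaSet, Set.mem_range]
  constructor
  · rintro ⟨⟨i, rfl⟩, hlo, -⟩
    refine ⟨i, not_le.1 fun hi => ?_, rfl⟩
    rw [hk i hi] at hlo
    omega
  · rintro ⟨i, hi, rfl⟩
    have := (beta_strictAnti c μ) hi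
    rw [hk k le_rfl] at this
    exact ⟨⟨i, rfl⟩, by omega, h.2 ⟨i, rfl⟩⟩

theorem IsWindow.card_window_betaSet {c : ℤ} {μ : YoungDiagram} {N : ℕ}
    (h : IsWindow (betaSet c μ) N) : (#(window (betaSet c μ) N) : ℤ) = N + c := by
  obtain ⟨k, hkN, -, hw⟩ := h.exists_window_betaSet_eq_image
  rw [hw, card_image_of_injective _ (beta_strictAnti c μ).injective, card_range, hkN]

theorem IsWindow.sum_window_betaSet {c : ℤ} {μ : YoungDiagram} {N : ℕ}
    (h : IsWindow (betaSet c μ) N) :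
    2 * ∑ x ∈ window (betaSet c μ) N, x =
      2 * μ.card + 2 * (N + c) * (c - 1) - (N + c) * (N + c - 1) := by
  have hgauss (k : ℕ) : 2 * ∑ i ∈ range k, (i : ℤ) = k * (k - 1) := by
    induction k with
    | zero => simp
    | succ k ih => rw [sum_range_succ]; push_cast; linear_combination ih
  obtain ⟨k, hkN, hrow, hw⟩ := h.exists_window_betaSet_eq_image
  rw [hw, sum_image fun a _ b _ hab => (beta_strictAnti c μ).injective hab, ← hkN,
    card_eq_sum_rowLen μ hrow]
  simp only [beta, sum_sub_distrib, sum_add_distrib, sum_const, card_range, nsmul_eq_mul]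
  push_cast
  linear_combination -hgauss k

theorem card_window_eq_count (S : Set ℤ) (N : ℕ) [DecidablePred fun m : ℕ => (N : ℤ) - 1 - m ∈ S] :
    #(window S N) = Nat.count (fun m : ℕ => (N : ℤ) - 1 - m ∈ S) (2 * N) := by
  have hw : window S N = ((range (2 * N)).filter fun m : ℕ => (N : ℤ) - 1 - m ∈ S).image
      fun m : ℕ => (N : ℤ) - 1 - m := by
    ext x
    simp only [mem_window, mem_image, mem_filter, mem_range]
    constructor
    · rintro ⟨hx, hlo, hhi⟩
      refine ⟨(N - 1 - x).toNat, ⟨by omega, ?_⟩, by omega⟩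
      rwa [Int.toNat_of_nonneg (by omega), sub_sub_cancel]
    · rintro ⟨m, ⟨hm, hmS⟩, rfl⟩
      exact ⟨hmS, by omega, by omega⟩
  rw [Nat.count_eq_card_filter_range, hw,
    card_image_of_injective _ fun a b hab => by simpa using hab]

theorem exists_betaSet_eq {S : Set ℤ} {N : ℕ} {c : ℤ} (h : IsWindow S N)
    (hcard : (#(window S N) : ℤ) = N + c) : ∃ μ, betaSet c μ = S := by
  classical
  -- enumerate `S` downwards from `N - 1`: its `i`-th element is `N - 1 - nth P i`
  set P : ℕ → Prop := fun m => (N : ℤ) - 1 - m ∈ S with hP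
  have hPtail : ∀ m, 2 * N ≤ m → P m := fun m hm => h.1 (by simp only [Set.mem_Iio]; omega)
  have hinf : (Set.ofPred P).Infinite :=
    Set.infinite_of_forall_exists_gt fun m => ⟨m + 2 * N + 1, hPtail _ (by omega), by omega⟩
  have hcount : (Nat.count P (2 * N) : ℤ) = N + c := by rw [← hcard, card_window_eq_count]
  set s : ℕ → ℤ := fun i => (N : ℤ) - 1 - Nat.nth P i with hs
  have hanti : StrictAnti s := fun a b hab => by
    have := Nat.nth_strictMono hinf hab
    simp only [hs]
    omega
  have htail : ∀ i, Nat.count P (2 * N) ≤ i → s i = c - 1 - i := fun i hi => by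
    obtain ⟨t, rfl⟩ := Nat.exists_eq_add_of_le hi
    simp only [hs, Nat.nth_count_add_of_forall_le hPtail]
    push_cast
    omega
  obtain ⟨μ, hμ⟩ := exists_beta_eq hanti htail
  refine ⟨μ, Set.ext fun x => ⟨?_, fun hx => ?_⟩⟩
  · rintro ⟨i, rfl⟩
    simpa [hμ, hs] using Nat.nth_mem_of_infinite hinf i
  · have hxN : x < N := h.2 hx
    have hm : P (N - 1 - x).toNat := by
      simpa [hP, Int.toNat_of_nonneg (show 0 ≤ (N : ℤ) - 1 - x by omega)] using hx
    refine ⟨Nat.count P (N - 1 - x).toNat, ?_⟩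
    rw [hμ, hs]
    simp only [Nat.nth_count hm]
    omega

theorem IsWindow.dcol0_eq {lam : YoungDiagram} {N : ℕ} (h : IsWindow (betaSet 0 lam) (2 * N)) :
    dcol0 lam = #(window (evenPart (betaSet 0 lam)) N) - N := by
  obtain ⟨k, hk, hrow, hw⟩ := h.exists_window_betaSet_eq_image
  obtain rfl : k = 2 * N := by omega
  have heven : ∑ i ∈ range (2 * N), (if Even (beta 0 lam i) then (1 : ℤ) else 0) =
      #(window (evenPart (betaSet 0 lam)) N) := by
    rw [← sum_image (f := fun x => if Even x then (1 : ℤ) else 0)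
      fun a _ b _ hab => (beta_strictAnti 0 lam).injective hab, ← hw, sum_window_two_mul]
    simp [parity_simps]
  rw [dcol0_eq_sum_neg_one_pow, sum_cells_eq_sum_rows lam hrow, ← heven,
    ← sum_range_two_mul_ite_odd N, ← sum_sub_distrib]
  simp only [sum_range_neg_one_pow_add, beta, add_zero]

theorem exists_betaSet_eq_evenPart (lam : YoungDiagram) :
    ∃ μ, betaSet (dcol0 lam) μ = evenPart (betaSet 0 lam) := by
  obtain ⟨N, hN⟩ := exists_isWindow_betaSet 0 lam
  have h := hN.mono (show N ≤ 2 * N by omega)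
  exact exists_betaSet_eq (isWindow_two_mul_iff.1 h).1 (by rw [h.dcol0_eq]; ring)

theorem exists_betaSet_eq_oddPart (lam : YoungDiagram) :
    ∃ μ, betaSet (-dcol0 lam) μ = oddPart (betaSet 0 lam) := by
  obtain ⟨N, hN⟩ := exists_isWindow_betaSet 0 lam
  have h := hN.mono (show N ≤ 2 * N by omega)
  have hcard := h.card_window_betaSet
  rw [card_window_two_mul] at hcard
  refine exists_betaSet_eq (isWindow_two_mul_iff.1 h).2 ?_
  rw [h.dcol0_eq]
  push_cast at hcard
  linarith

noncomputable def evenQuotient (lam : YoungDiagram) : YoungDiagram :=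
  (exists_betaSet_eq_evenPart lam).choose

noncomputable def oddQuotient (lam : YoungDiagram) : YoungDiagram :=
  (exists_betaSet_eq_oddPart lam).choose

theorem betaSet_evenQuotient (lam : YoungDiagram) :
    betaSet (dcol0 lam) (evenQuotient lam) = evenPart (betaSet 0 lam) :=
  (exists_betaSet_eq_evenPart lam).choose_spec

theorem betaSet_oddQuotient (lam : YoungDiagram) :
    betaSet (-dcol0 lam) (oddQuotient lam) = oddPart (betaSet 0 lam) :=
  (exists_betaSet_eq_oddPart lam).choose_spec

theorem card_eq_card_quotients (lam : YoungDiagram) :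
    (lam.card : ℤ) = 2 * (evenQuotient lam).card + 2 * (oddQuotient lam).card +
      2 * dcol0 lam ^ 2 - dcol0 lam := by
  obtain ⟨N, hN⟩ := exists_isWindow_betaSet 0 lam
  have h := hN.mono (show N ≤ 2 * N by omega)
  obtain ⟨h₀, h₁⟩ := isWindow_two_mul_iff.1 h
  have hsum := sum_window_two_mul (betaSet 0 lam) N id
  rw [← betaSet_evenQuotient] at h₀
  rw [← betaSet_oddQuotient] at h₁
  rw [← betaSet_evenQuotient, ← betaSet_oddQuotient] at hsum
  simp only [id, sum_add_distrib, sum_const, nsmul_eq_mul, mul_one] at hsum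
  rw [← mul_sum, ← mul_sum] at hsum
  have e := h.sum_window_betaSet
  push_cast at e
  linarith [h₀.sum_window_betaSet, h₁.sum_window_betaSet, h₁.card_window_betaSet]

theorem eq_of_quotients_eq {lam lam' : YoungDiagram} (hd : dcol0 lam = dcol0 lam')
    (h₀ : evenQuotient lam = evenQuotient lam') (h₁ : oddQuotient lam = oddQuotient lam') :
    lam = lam' :=
  betaSet_injective 0 <| eq_of_evenPart_eq_of_oddPart_eq
    (by rw [← betaSet_evenQuotient, ← betaSet_evenQuotient, h₀, hd])
    (by rw [← betaSet_oddQuotient, ← betaSet_oddQuotient, h₁, hd])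

theorem exists_quotients_eq (d : ℤ) (μ₀ μ₁ : YoungDiagram) :
    ∃ lam, dcol0 lam = d ∧ evenQuotient lam = μ₀ ∧ oddQuotient lam = μ₁ := by
  obtain ⟨N₀, h₀⟩ := exists_isWindow_betaSet d μ₀
  obtain ⟨N₁, h₁⟩ := exists_isWindow_betaSet (-d) μ₁
  set N := max N₀ N₁
  replace h₀ := h₀.mono (le_max_left N₀ N₁)
  replace h₁ := h₁.mono (le_max_right N₀ N₁)
  set S := interleave (betaSet d μ₀) (betaSet (-d) μ₁)
  have hS : IsWindow S (2 * N) := isWindow_two_mul_iff.2 (by simpa [S] using ⟨h₀, h₁⟩)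
  obtain ⟨lam, hlam⟩ := exists_betaSet_eq (c := 0) hS (by
    rw [card_window_two_mul]
    simp only [S, evenPart_interleave, oddPart_interleave]
    push_cast
    linarith [h₀.card_window_betaSet, h₁.card_window_betaSet])
  have hd : dcol0 lam = d := by
    rw [← hlam] at hS
    rw [hS.dcol0_eq, hlam, evenPart_interleave, h₀.card_window_betaSet]
    ring
  refine ⟨lam, hd, betaSet_injective d ?_, betaSet_injective (-d) ?_⟩
  · rw [← hd, betaSet_evenQuotient, hlam, evenPart_interleave, hd]
  · rw [← hd, betaSet_oddQuotient, hlam, oddPart_interleave, hd]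

end YoungDiagram

/-- Coefficientwise form of `∑_{λ : d(λ)=d} x^{(|λ|-(2d²-d))/2} = ∏_{k≥1} (1-x^k)⁻²`:
the number of partitions `λ` with `d(λ) = d` and `|λ| = 2d² - d + 2n` equals the
number of ordered pairs of partitions of total size `n`. -/
theorem generating_function_color0 (d : ℤ) (n : ℕ) :
    Nonempty
      ({lam : YoungDiagram // dcol0 lam = d ∧ (lam.card : ℤ) = 2 * d ^ 2 - d + 2 * n} ≃
        {p : YoungDiagram × YoungDiagram // p.1.card + p.2.card = n}) := by
  refine ⟨Equiv.ofBijective (fun lam => ⟨(lam.1.evenQuotient, lam.1.oddQuotient), ?_⟩) ⟨?_, ?_⟩⟩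
  · obtain ⟨lam, hd, hcard⟩ := lam
    have := lam.card_eq_card_quotients
    rw [hd] at this
    zify
    linarith
  · rintro ⟨lam, hd, _⟩ ⟨lam', hd', _⟩ h
    simp only [Subtype.mk.injEq, Prod.mk.injEq] at h
    exact Subtype.ext (YoungDiagram.eq_of_quotients_eq (hd.trans hd'.symm) h.1 h.2)
  · rintro ⟨⟨μ₀, μ₁⟩, hn⟩
    obtain ⟨lam, hd, h₀, h₁⟩ := YoungDiagram.exists_quotients_eq d μ₀ μ₁
    have hcard := lam.card_eq_card_quotients
    rw [hd, h₀, h₁] at hcard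
    refine ⟨⟨lam, hd, ?_⟩, by simp [h₀, h₁]⟩
    rw [hcard, ← hn]
    push_cast
    ring
end
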